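/- Let θ be real and δ ≥ 0. Let {(αᵢ,βᵢ)}_{i∈I} and {(α'ⱼ,β'ⱼ)}_{j∈J} be two families of parameter pairs whose cone regions have the same union: ⋃_{i∈I} C(αᵢ,βᵢ) = ⋃_{j∈J} C(α'ⱼ,β'ⱼ). Then the unions of their image cones under Rot(θ,1,δ) coincide: ⋃_{i∈I} (image cone of (αᵢ,βᵢ) under Rot(θ,1,δ)) = ⋃_{j∈J} (image cone of (α'ⱼ,β'ⱼ) under Rot(θ,1,δ)). (So for aperture-additive rotations with δ ≥ 0, the existential restriction distributes over the disjunction of multicones: the image of a multicone region is well-defined, independently of its representation as a union of cones.) -/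
import Mathlib

/-- The cone `C(α,β) = { exp(t·I) : α ≤ t ≤ β } ⊆ ℂ`. -/
noncomputable def cone (α β : ℝ) : Set ℂ :=
  {z : ℂ | ∃ t : ℝ, α ≤ t ∧ t ≤ β ∧ z = Complex.exp (t * Complex.I)}

/-- The rotation `Rot(θ,γ,δ)` acting on parameter pairs `(α,β) ∈ ℝ × ℝ`. -/
noncomputable def rot (θ γ δ : ℝ) (p : ℝ × ℝ) : ℝ × ℝ :=
  if p.1 > p.2 ∨ p.2 - p.1 ≥ 2 * Real.pi then p
  else (((p.1 + p.2) / 2) + θ - (γ * (p.2 - p.1) + δ) / 2,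
        ((p.1 + p.2) / 2) + θ + (γ * (p.2 - p.1) + δ) / 2)

/-- The image cone of `(α,β)` under `Rot(θ,γ,δ)`. -/
noncomputable def imageCone (θ γ δ : ℝ) (p : ℝ × ℝ) : Set ℂ :=
  cone (rot θ γ δ p).1 (rot θ γ δ p).2

lemma cone_full {α β : ℝ} (h : 2 * Real.pi ≤ β - α) (x : ℝ) :
    Complex.exp ((x : ℂ) * Complex.I) ∈ cone α β := by
  have hπ : (0:ℝ) < 2 * Real.pi := by positivity
  set n : ℤ := ⌈(α - x) / (2 * Real.pi)⌉ with hn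
  have h1 : (α - x) / (2 * Real.pi) ≤ (n : ℝ) := Int.le_ceil _
  have h2 : (n : ℝ) < (α - x) / (2 * Real.pi) + 1 := Int.ceil_lt_add_one _
  have h1' : α - x ≤ (n : ℝ) * (2 * Real.pi) := (div_le_iff₀ hπ).mp h1
  have h2' : (n : ℝ) * (2 * Real.pi) < α - x + 2 * Real.pi := by
    have hm := mul_lt_mul_of_pos_right h2 hπ
    have hq : (α - x) / (2 * Real.pi) * (2 * Real.pi) = α - x :=
      div_mul_cancel₀ _ (ne_of_gt hπ)
    nlinarith
  refine ⟨x + 2 * Real.pi * n, by nlinarith, by nlinarith, ?_⟩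
  rw [show ((x + 2 * Real.pi * n : ℝ) : ℂ) * Complex.I
      = (x : ℂ) * Complex.I + (n : ℤ) * (2 * Real.pi * Complex.I) by push_cast; ring,
    Complex.exp_add, Complex.exp_int_mul_two_pi_mul_I, mul_one]

lemma exp_mul_exp (a b : ℝ) :
    Complex.exp ((a : ℂ) * Complex.I) * Complex.exp ((b : ℂ) * Complex.I)
      = Complex.exp (((a + b : ℝ) : ℂ) * Complex.I) := by
  rw [← Complex.exp_add]; push_cast; ring_nf

lemma imageCone_eq (θ δ : ℝ) (hδ : 0 ≤ δ) (p : ℝ × ℝ) :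
    imageCone θ 1 δ p =
      {z : ℂ | ∃ s : ℝ, |s| ≤ δ / 2 ∧ ∃ w ∈ cone p.1 p.2,
        z = Complex.exp (((θ + s : ℝ) : ℂ) * Complex.I) * w} := by
  obtain ⟨α, β⟩ := p
  simp only [imageCone, rot]
  by_cases hcase : α > β ∨ β - α ≥ 2 * Real.pi
  · rw [if_pos hcase]
    rcases hcase with hab | hfull
    · -- empty cone
      ext z
      constructor
      · rintro ⟨t, h1, h2, rfl⟩; linarith
      · rintro ⟨s, hs, w, ⟨t, h1, h2, rfl⟩, rfl⟩; exfalso; linarith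
    · -- full cone
      ext z
      constructor
      · rintro ⟨t, h1, h2, rfl⟩
        refine ⟨0, by simpa using by positivity, Complex.exp (((t - θ : ℝ):ℂ) * Complex.I),
          cone_full hfull _, ?_⟩
        rw [exp_mul_exp]; ring_nf
      · rintro ⟨s, hs, w, ⟨t, h1, h2, rfl⟩, rfl⟩
        rw [exp_mul_exp]
        exact cone_full hfull _
  · rw [if_neg hcase]
    push_neg at hcase
    obtain ⟨hab, hlt⟩ := hcase
    ext z
    constructor
    · rintro ⟨t, h1, h2, rfl⟩
      simp only at h1 h2
      have h1' : α - δ / 2 + θ ≤ t := by linarith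
      have h2' : t ≤ β + δ / 2 + θ := by linarith
      rcases le_total (t - θ) α with hc | hc
      · refine ⟨(t - θ) - α, by rw [abs_le]; constructor <;> linarith,
          Complex.exp ((α:ℂ) * Complex.I), ⟨α, le_refl _, hab, rfl⟩, ?_⟩
        rw [exp_mul_exp]
        congr 1
        push_cast; ring
      · rcases le_total (t - θ) β with hc2 | hc2
        · refine ⟨0, by simpa using by positivity,
            Complex.exp ((Complex.ofReal (t - θ)) * Complex.I), ⟨t - θ, hc, hc2, rfl⟩, ?_⟩
          rw [exp_mul_exp]
          congr 1
          push_cast; ring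
        · refine ⟨(t - θ) - β, by rw [abs_le]; constructor <;> linarith,
            Complex.exp ((β:ℂ) * Complex.I), ⟨β, hab, le_refl _, rfl⟩, ?_⟩
          rw [exp_mul_exp]
          congr 1
          push_cast; ring
    · rintro ⟨s, hs, w, ⟨t, h1, h2, rfl⟩, rfl⟩
      rw [abs_le] at hs
      rw [exp_mul_exp]
      refine ⟨θ + s + t, ?_, ?_, rfl⟩ <;> simp only <;> linarith

theorem apertureAdditive_imageCone_well_defined_on_multicones
    {ι κ : Type*} (θ δ : ℝ) (hδ : 0 ≤ δ) (f : ι → ℝ × ℝ) (g : κ → ℝ × ℝ)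
    (h : (⋃ i, cone (f i).1 (f i).2) = ⋃ j, cone (g j).1 (g j).2) :
    (⋃ i, imageCone θ 1 δ (f i)) = ⋃ j, imageCone θ 1 δ (g j) := by
  ext z
  simp only [Set.mem_iUnion, imageCone_eq θ δ hδ, Set.mem_setOf_eq]
  constructor
  · rintro ⟨i, s, hs, w, hw, rfl⟩
    have hw' : w ∈ ⋃ j, cone (g j).1 (g j).2 := h ▸ Set.mem_iUnion.mpr ⟨i, hw⟩
    obtain ⟨j, hj⟩ := Set.mem_iUnion.mp hw'
    exact ⟨j, s, hs, w, hj, rfl⟩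
  · rintro ⟨j, s, hs, w, hw, rfl⟩
    have hw' : w ∈ ⋃ i, cone (f i).1 (f i).2 := h ▸ Set.mem_iUnion.mpr ⟨j, hw⟩
    obtain ⟨i, hi⟩ := Set.mem_iUnion.mp hw'
    exact ⟨i, s, hs, w, hi, rfl⟩
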